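/- arXiv:2205.14220 — 3 statements merged into one kernel-verified Lean document; each statement's English description precedes it below -/
import Mathlib

section
/- The multiplicative MTL penalty minimization over the factorization is equivalent to the joint square-root penalty: for coefficients Θ ∈ ℝ^{p×K}, inf over (τ ∈ ℝ₊^p, γ ∈ ℝ^{p×K}) with Θⱼ⁽ᵏ⁾ = τⱼ γⱼ⁽ᵏ⁾ for all j,k of η₁ Σⱼ τⱼ + η₂ Σⱼ Σₖ |γⱼ⁽ᵏ⁾| equals 2√(η₁η₂) Σⱼ (Σₖ |Θⱼ⁽ᵏ⁾|)^{1/2}. -/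
/-!
The problem decouples over the rows of `Θ`. For a row `θ = t • g` with `t ≥ 0` we have
`∑ₖ |θₖ| = t ∑ₖ |gₖ|`, so AM-GM gives `η₁ t + η₂ ∑ₖ |gₖ| ≥ 2 √(η₁ η₂ ∑ₖ |θₖ|)`, with equality
when the two terms balance, i.e. at `t = √(η₂ ∑ₖ |θₖ| / η₁)` and `g = t⁻¹ • θ`.
-/

open Finset Real

lemma two_mul_sqrt_mul_le_add {x y : ℝ} (hx : 0 ≤ x) (hy : 0 ≤ y) : 2 * √(x * y) ≤ x + y := by
  rw [sqrt_mul hx]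
  nlinarith [sq_nonneg (√x - √y), sq_sqrt hx, sq_sqrt hy]

lemma two_sqrt_mul_sqrt_mul_le {a b t c : ℝ} (ha : 0 ≤ a) (hb : 0 ≤ b) (ht : 0 ≤ t) (hc : 0 ≤ c) :
    2 * √(a * b) * √(t * c) ≤ a * t + b * c := by
  calc 2 * √(a * b) * √(t * c) = 2 * √(a * t * (b * c)) := by
        rw [mul_assoc, ← sqrt_mul (mul_nonneg ha hb)]; ring_nf
    _ ≤ a * t + b * c := two_mul_sqrt_mul_le_add (mul_nonneg ha ht) (mul_nonneg hb hc)

lemma mul_add_mul_div_eq_of_mul_eq_mul_sq {a b s t : ℝ} (ha : 0 < a) (hs : 0 ≤ s) (ht : 0 ≤ t)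
    (hbs : b * s = a * t ^ 2) :
    a * t + b * (s / t) = 2 * √(a * b) * √s := by
  have hsqrt : √(a * b) * √s = a * t := by
    rw [← sqrt_mul' _ hs, mul_assoc, hbs, ← mul_assoc, ← sq, ← mul_pow, sqrt_sq (by positivity)]
  rw [mul_assoc, hsqrt, ← mul_div_assoc, hbs]
  rcases ht.eq_or_lt with rfl | ht
  · simp
  · field_simp
    ring

lemma sum_abs_mul_of_nonneg {ι : Type*} [Fintype ι] {t : ℝ} (ht : 0 ≤ t) (g : ι → ℝ) :
    ∑ k, |t * g k| = t * ∑ k, |g k| := by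
  simp only [abs_mul, abs_of_nonneg ht, mul_sum]

lemma two_sqrt_mul_sqrt_sum_abs_le {ι : Type*} [Fintype ι] {a b t : ℝ} (ha : 0 ≤ a) (hb : 0 ≤ b)
    (ht : 0 ≤ t) (g : ι → ℝ) :
    2 * √(a * b) * √(∑ k, |t * g k|) ≤ a * t + b * ∑ k, |g k| := by
  rw [sum_abs_mul_of_nonneg ht]
  exact two_sqrt_mul_sqrt_mul_le ha hb ht (sum_nonneg fun k _ => abs_nonneg _)

lemma exists_factorization_sum_abs_eq {ι : Type*} [Fintype ι] {a b : ℝ} (ha : 0 < a) (hb : 0 < b)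
    (θ : ι → ℝ) :
    ∃ (t : ℝ) (g : ι → ℝ), 0 ≤ t ∧ (∀ k, θ k = t * g k) ∧
      a * t + b * ∑ k, |g k| = 2 * √(a * b) * √(∑ k, |θ k|) := by
  set s := ∑ k, |θ k|
  have hs : 0 ≤ s := sum_nonneg fun k _ => abs_nonneg _
  set t := √(b * s / a)
  refine ⟨t, fun k => t⁻¹ * θ k, sqrt_nonneg _, fun k => ?_, ?_⟩
  · rcases eq_or_ne t 0 with ht | ht
    · -- `t = 0` only for a zero row, so the junk value `0⁻¹ = 0` does no harm.
      have hs0 : s = 0 := by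
        rwa [sqrt_eq_zero (by positivity), div_eq_zero_iff, or_iff_left ha.ne',
          mul_eq_zero, or_iff_right hb.ne'] at ht
      have hθ : |θ k| = 0 := (sum_eq_zero_iff_of_nonneg fun k _ => abs_nonneg _).mp hs0 k
        (mem_univ k)
      simp [abs_eq_zero.mp hθ]
    · rw [← mul_assoc, mul_inv_cancel₀ ht, one_mul]
  · rw [sum_abs_mul_of_nonneg (inv_nonneg.mpr (sqrt_nonneg _)), ← div_eq_inv_mul]
    refine mul_add_mul_div_eq_of_mul_eq_mul_sq ha hs (sqrt_nonneg _) ?_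
    rw [sq_sqrt (by positivity), mul_div_cancel₀ _ ha.ne']

/-- For coefficients `Θ ∈ ℝ^{p×K}`, the infimum over factorizations
`Θⱼ⁽ᵏ⁾ = τⱼ γⱼ⁽ᵏ⁾` with `τⱼ ≥ 0` of the multiplicative MTL penalty
`η₁ Σⱼ τⱼ + η₂ Σⱼ Σₖ |γⱼ⁽ᵏ⁾|` equals the joint square-root penalty
`2 √(η₁ η₂) Σⱼ (Σₖ |Θⱼ⁽ᵏ⁾|)^{1/2}`. -/
theorem mtl_penalty_equiv (p K : ℕ) (η₁ η₂ : ℝ) (hη₁ : 0 < η₁) (hη₂ : 0 < η₂)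
    (Θ : Fin p → Fin K → ℝ) :
    sInf {x : ℝ | ∃ (τ : Fin p → ℝ) (γ : Fin p → Fin K → ℝ),
        (∀ j, 0 ≤ τ j) ∧ (∀ j k, Θ j k = τ j * γ j k) ∧
        x = η₁ * ∑ j, τ j + η₂ * ∑ j, ∑ k, |γ j k|}
      = 2 * Real.sqrt (η₁ * η₂) * ∑ j, Real.sqrt (∑ k, |Θ j k|) := by
  have row_sum (τ : Fin p → ℝ) (γ : Fin p → Fin K → ℝ) :
      η₁ * ∑ j, τ j + η₂ * ∑ j, ∑ k, |γ j k| = ∑ j, (η₁ * τ j + η₂ * ∑ k, |γ j k|) := by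
    rw [mul_sum, mul_sum, ← sum_add_distrib]
  rw [mul_sum]
  refine IsLeast.csInf_eq ⟨?_, ?_⟩
  · choose τ γ hτ hΘ hrow using fun j => exists_factorization_sum_abs_eq hη₁ hη₂ (Θ j)
    exact ⟨τ, γ, hτ, hΘ, by rw [row_sum, sum_congr rfl fun j _ => hrow j]⟩
  · rintro x ⟨τ, γ, hτ, hΘ, rfl⟩
    rw [row_sum]
    refine sum_le_sum fun j _ => ?_
    simp only [hΘ]
    exact two_sqrt_mul_sqrt_sum_abs_le hη₁.le hη₂.le (hτ j) (γ j)
end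

section
/- Refined conditioning event equivalence (Lemma 1): the event {Ê = E, Ŝ = S, Γ̂ = Γ, Û = U} is equivalent to the event {V > 0, Γ̂ = Γ, Γ − D V > 0, Û = U}, where V collects, for each active predictor j, the absolute values of its nonzero coefficients across all but the last task in which it is active, Γⱼ = Σₖ |Θ̂ⱼ⁽ᵏ⁾|, and D is the 0-1 matrix with D_i = (0,…,1_{(d_{j_i}−1)},…,0) recording which entries of V belong to predictor j_i. -/
theorem forall_fin_dite_lt_pred_iff {α : Type*} {d : ℕ} (hd : 1 ≤ d) (p : α → Prop)
    (v : Fin (d - 1) → α) (c : α) :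
    (∀ j : Fin d, p (if h : (j : ℕ) < d - 1 then v ⟨j, h⟩ else c)) ↔ (∀ l, p (v l)) ∧ p c := by
  constructor
  · intro h
    refine ⟨fun l => ?_, ?_⟩
    · simpa using h ⟨l, by omega⟩
    · simpa using h ⟨d - 1, by omega⟩
  · rintro ⟨hv, hc⟩ j
    split
    · exact hv _
    · exact hc

/-- Lemma 1: For each active predictor `i` (active in `d i ≥ 1` tasks), the
absolute active coefficients of predictor `i` are the entries `v i l`, `l < d i - 1`,
together with the last one `Γ i - Σₗ v i l` (since `Γ i` is the sum of all of them).
The event that all absolute active coefficients are positive (equivalently, the estimated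
supports and signs are as observed, given `Γ̂ = Γ` and `Û = U`) is equivalent to the event
`V > 0` and `Γ - D V > 0` componentwise. -/
theorem refined_conditioning_event_equiv (r : ℕ) (d : Fin r → ℕ) (hd : ∀ i, 1 ≤ d i)
    (v : (i : Fin r) → Fin (d i - 1) → ℝ) (Γ : Fin r → ℝ) :
    (∀ i : Fin r, ∀ j : Fin (d i),
        0 < if h : (j : ℕ) < d i - 1 then v i ⟨j, h⟩ else Γ i - ∑ l, v i l)
      ↔ ((∀ i, ∀ l, 0 < v i l) ∧ (∀ i, 0 < Γ i - ∑ l, v i l)) := by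
  rw [← forall_and]
  exact forall_congr' fun i => forall_fin_dite_lt_pred_iff (hd i) (0 < ·) (v i) _
end

section
/- Observed Fisher information formula (Theorem 2, variance part): with the notation above, the inverse observed information matrix equals Î^{-1} = L^{-1}ΣL'^{-1} + L^{-1}Σ(P'Δ^{-1}P − P'Δ^{-1}(Δ^{-1} + ∇²φ_{H,g}(V̂))^{-1}Δ^{-1}P)ΣL'^{-1}, obtained by evaluating L'Σ^{-1}∇²F*(ζ)Σ^{-1}L at ζ = Σ^{-1}(Lβ^MLE + m) and inverting, where ∇²F*(ζ) = (Σ^{-1} + P'Δ^{-1}P − P'Δ^{-1}(Δ^{-1}+∇²φ_{H,g}(V(β*(ζ))))^{-1}Δ^{-1}P)^{-1}. -/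
/-!
Put `A = Δ⁻¹` and `B = Pᵀ(A - A(A + M)⁻¹A)P`. Since `A - A(A + M)⁻¹A = A(A + M)⁻¹M` is the
congruence `Xᴴ(M + MA⁻¹M)X` by `X = (A + M)⁻¹A` of a positive semidefinite matrix, `B ⪰ 0`;
hence `Σ⁻¹ + B` is invertible, and inverting `LᵀΣ⁻¹(Σ⁻¹ + B)⁻¹Σ⁻¹L` factor by factor gives
`L⁻¹Σ(Σ⁻¹ + B)ΣLᵀ⁻¹`.
-/

open Matrix

namespace Matrix

variable {n : Type*} [Fintype n] [DecidableEq n]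

section CommRing

variable {α : Type*} [CommRing α]

theorem sub_mul_inv_add_mul_eq {A M : Matrix n n α} (hA : IsUnit A.det)
    (hAM : IsUnit (A + M).det) :
    A - A * (A + M)⁻¹ * A = A * (A + M)⁻¹ * (M + M * A⁻¹ * M) * (A + M)⁻¹ * A := by
  have hN : M + M * A⁻¹ * M = M * A⁻¹ * (A + M) := by
    rw [Matrix.mul_add, nonsing_inv_mul_cancel_right _ _ hA]
  calc A - A * (A + M)⁻¹ * A = A * (A + M)⁻¹ * ((A + M) - A) := by
        rw [Matrix.mul_sub, Matrix.mul_assoc _ _ (A + M), nonsing_inv_mul _ hAM,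
          Matrix.mul_one]
    _ = A * (A + M)⁻¹ * M := by rw [add_sub_cancel_left]
    _ = A * (A + M)⁻¹ * (M + M * A⁻¹ * M) * (A + M)⁻¹ * A := by
        rw [hN]
        simp only [Matrix.mul_assoc, mul_nonsing_inv_cancel_left _ _ hAM,
          nonsing_inv_mul _ hA, Matrix.mul_one]

theorem inv_mul_inv_mul_inv_add_inv_mul_inv_mul (K L : Matrix n n α) {S B : Matrix n n α}
    (hS : IsUnit S.det) (hSB : IsUnit (S⁻¹ + B).det) :
    (K * S⁻¹ * (S⁻¹ + B)⁻¹ * S⁻¹ * L)⁻¹ = L⁻¹ * S * K⁻¹ + L⁻¹ * S * B * S * K⁻¹ := by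
  simp only [mul_inv_rev, nonsing_inv_nonsing_inv _ hS, nonsing_inv_nonsing_inv _ hSB,
    Matrix.mul_add, Matrix.add_mul, Matrix.mul_assoc, mul_nonsing_inv_cancel_left _ _ hS]

end CommRing

variable {K : Type*} [Field K] [PartialOrder K] [StarRing K] [StarOrderedRing K]

theorem PosDef.posSemidef_sub_mul_inv_add_mul {A M : Matrix n n K} (hA : A.PosDef)
    (hM : M.PosSemidef) : (A - A * (A + M)⁻¹ * A).PosSemidef := by
  have hAM := hA.add_posSemidef hM
  have hAdet := (isUnit_iff_isUnit_det A).mp hA.isUnit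
  have hAMdet := (isUnit_iff_isUnit_det _).mp hAM.isUnit
  have hX : ((A + M)⁻¹ * A)ᴴ = A * (A + M)⁻¹ := by
    rw [conjTranspose_mul, conjTranspose_nonsing_inv, hA.isHermitian.eq, hAM.isHermitian.eq]
  have hMAM : (M + M * A⁻¹ * M).PosSemidef := by
    simpa only [hM.isHermitian.eq] using hM.add (hA.inv.posSemidef.conjTranspose_mul_mul_same M)
  rw [sub_mul_inv_add_mul_eq hAdet hAMdet]
  simpa only [hX, Matrix.mul_assoc] using hMAM.conjTranspose_mul_mul_same ((A + M)⁻¹ * A)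

end Matrix

theorem observed_fisher_information_formula_general (d m : ℕ)
    (L Sg : Matrix (Fin d) (Fin d) ℝ) (hSg : Sg.PosDef)
    (Δ : Matrix (Fin m) (Fin m) ℝ) (hΔ : Δ.PosDef)
    (M : Matrix (Fin m) (Fin m) ℝ) (hM : M.PosSemidef)
    (P : Matrix (Fin m) (Fin d) ℝ) :
    (Lᵀ * Sg⁻¹
        * (Sg⁻¹ + Pᵀ * Δ⁻¹ * P - Pᵀ * Δ⁻¹ * (Δ⁻¹ + M)⁻¹ * Δ⁻¹ * P)⁻¹
        * Sg⁻¹ * L)⁻¹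
      = L⁻¹ * Sg * (Lᵀ)⁻¹
        + L⁻¹ * Sg * (Pᵀ * Δ⁻¹ * P - Pᵀ * Δ⁻¹ * (Δ⁻¹ + M)⁻¹ * Δ⁻¹ * P)
          * Sg * (Lᵀ)⁻¹ := by
  set B := Pᵀ * Δ⁻¹ * P - Pᵀ * Δ⁻¹ * (Δ⁻¹ + M)⁻¹ * Δ⁻¹ * P
  have hB : B.PosSemidef := by
    have hB' : B = Pᴴ * (Δ⁻¹ - Δ⁻¹ * (Δ⁻¹ + M)⁻¹ * Δ⁻¹) * P := by
      simp only [B, conjTranspose_eq_transpose_of_trivial, Matrix.mul_sub, Matrix.sub_mul,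
        Matrix.mul_assoc]
    rw [hB']
    exact (hΔ.inv.posSemidef_sub_mul_inv_add_mul hM).conjTranspose_mul_mul_same P
  have hSgB : (Sg⁻¹ + B).PosDef := hSg.inv.add_posSemidef hB
  rw [add_sub_assoc]
  exact inv_mul_inv_mul_inv_add_inv_mul_inv_mul _ _
    ((isUnit_iff_isUnit_det _).mp hSg.isUnit) ((isUnit_iff_isUnit_det _).mp hSgB.isUnit)

/-- Theorem 2, variance part: with
`∇²F*(ζ) = (Σ⁻¹ + P'Δ⁻¹P - P'Δ⁻¹(Δ⁻¹ + M)⁻¹Δ⁻¹P)⁻¹` evaluated at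
`ζ = Σ⁻¹(Lβ^MLE + m)` (so that `M = ∇²φ_{H,g}(V̂)` is positive semidefinite), the observed
information `Î = L'Σ⁻¹ ∇²F*(ζ) Σ⁻¹ L` satisfies
`Î⁻¹ = L⁻¹ΣL'⁻¹ + L⁻¹Σ(P'Δ⁻¹P - P'Δ⁻¹(Δ⁻¹ + M)⁻¹Δ⁻¹P)ΣL'⁻¹`. -/
theorem observed_fisher_information_formula (d m : ℕ)
    (L Sg : Matrix (Fin d) (Fin d) ℝ) (hL : IsUnit L.det) (hSg : Sg.PosDef)
    (Δ : Matrix (Fin m) (Fin m) ℝ) (hΔ : Δ.PosDef)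
    (M : Matrix (Fin m) (Fin m) ℝ) (hM : M.PosSemidef)
    (P : Matrix (Fin m) (Fin d) ℝ) :
    (Lᵀ * Sg⁻¹
        * (Sg⁻¹ + Pᵀ * Δ⁻¹ * P - Pᵀ * Δ⁻¹ * (Δ⁻¹ + M)⁻¹ * Δ⁻¹ * P)⁻¹
        * Sg⁻¹ * L)⁻¹
      = L⁻¹ * Sg * (Lᵀ)⁻¹
        + L⁻¹ * Sg * (Pᵀ * Δ⁻¹ * P - Pᵀ * Δ⁻¹ * (Δ⁻¹ + M)⁻¹ * Δ⁻¹ * P)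
          * Sg * (Lᵀ)⁻¹ :=
  observed_fisher_information_formula_general d m L Sg hSg Δ hΔ M hM P
end
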